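/- Let Σ and Ψ be n×n positive semidefinite matrices with Σ ⪰ Ψ ⪰ 0 and Ψ⁺ ⪰ Σ⁺, and let Φ := (Σ^{1/2})ᵀ Ψ⁺ Σ^{1/2}. Then pdet(Σ) · pdet(Ψ⁺) = pdet(Φ), where pdet denotes the pseudo-determinant (the product of all nonzero eigenvalues). -/

import Mathlib

open Matrix

/-- `B` is the Moore–Penrose pseudoinverse of `A`. -/
def IsMoorePenroseInv {n : ℕ} (A B : Matrix (Fin n) (Fin n) ℝ) : Prop :=
  A * B * A = A ∧ B * A * B = B ∧ (A * B)ᵀ = A * B ∧ (B * A)ᵀ = B * A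

/-- Pseudo-determinant of a symmetric real matrix: the product of its nonzero eigenvalues. -/
noncomputable def pdet {n : ℕ} (A : Matrix (Fin n) (Fin n) ℝ) (hA : A.IsHermitian) : ℝ :=
  ∏ i ∈ Finset.univ.filter (fun i => hA.eigenvalues i ≠ 0), hA.eigenvalues i

section
open scoped ComplexOrder

/-- The positive semidefinite square root, as defined in Mathlib (Dec 2024), since removed. -/
noncomputable def Matrix.PosSemidef.sqrt {n 𝕜 : Type*} [Fintype n] [RCLike 𝕜] [DecidableEq n]
    {A : Matrix n n 𝕜} (hA : A.PosSemidef) : Matrix n n 𝕜 :=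
  hA.1.eigenvectorUnitary.1 * diagonal ((↑) ∘ (fun i => Real.sqrt (hA.1.eigenvalues i))) *
  (star hA.1.eigenvectorUnitary : Matrix n n 𝕜)

end

/-!
Write `S = Σ^{1/2}` and `Φ = S Ψ⁺ S`. The two Löwner inequalities give
`ker Σ ⊆ ker Ψ = ker Ψ⁺` and `ker Ψ⁺ ⊆ ker Σ⁺ = ker Σ`, so `S`, `Σ = S²`, `Ψ⁺` and `Φ` all have
the same kernel, hence the same orthogonal projection `P` onto their range. For such a symmetric
`M` one has `pdet M = det (M + 1 - P)`, and `M ↦ M + 1 - P` is multiplicative on matrices fixed by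
`P` on both sides. Therefore
`pdet Φ = det (S + 1 - P) * det (Ψ⁺ + 1 - P) * det (S + 1 - P) = pdet Σ * pdet Ψ⁺`.
-/

lemma add_one_sub_mul_add_one_sub {R : Type*} [Ring R] {X Y P : R}
    (hX : X * P = X) (hY : P * Y = Y) (hP : P * P = P) :
    (X + 1 - P) * (Y + 1 - P) = X * Y + 1 - P := by
  simp only [sub_mul, add_mul, mul_sub, mul_add, mul_one, one_mul, hX, hY, hP]
  abel

namespace Matrix

section Kernel

variable {R l m n : Type*} [CommRing R] [Fintype m]

lemma ker_le_ker_mul [Fintype n] (A : Matrix l m R) (B : Matrix m n R) :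
    LinearMap.ker B.mulVecLin ≤ LinearMap.ker (A * B).mulVecLin := by
  rw [mulVecLin_mul]
  exact LinearMap.ker_le_ker_comp _ _

lemma mul_eq_left_of_ker_le {A : Matrix l m R} {C : Matrix n m R} {P : Matrix m m R}
    (hker : LinearMap.ker A.mulVecLin ≤ LinearMap.ker C.mulVecLin) (hAP : A * P = A) :
    C * P = C := by
  refine ext_iff_mulVec.mpr fun v => ?_
  have hv : P *ᵥ v - v ∈ LinearMap.ker A.mulVecLin := by
    simp [mulVec_sub, mulVec_mulVec, hAP]
  simpa [mulVec_sub, mulVec_mulVec, sub_eq_zero] using hker hv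

end Kernel

section Hermitian

open scoped ComplexOrder MatrixOrder

variable {m 𝕜 : Type*} [Fintype m] [RCLike 𝕜] {A B M N : Matrix m m 𝕜}

lemma PosSemidef.ker_le_of_sub_posSemidef (hB : B.PosSemidef) (hAB : (A - B).PosSemidef) :
    LinearMap.ker A.mulVecLin ≤ LinearMap.ker B.mulVecLin := by
  intro x hx
  simp only [LinearMap.mem_ker, mulVecLin_apply] at hx ⊢
  refine (hB.dotProduct_mulVec_zero_iff x).mp (le_antisymm ?_ (hB.dotProduct_mulVec_nonneg x))
  have h := hAB.dotProduct_mulVec_nonneg x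
  rwa [sub_mulVec, dotProduct_sub, hx, dotProduct_zero, zero_sub, neg_nonneg] at h

lemma IsHermitian.ker_mul_self (hM : M.IsHermitian) :
    LinearMap.ker (M * M).mulVecLin = LinearMap.ker M.mulVecLin := by
  simpa only [hM.eq] using ker_mulVecLin_conjTranspose_mul_self M

lemma IsHermitian.ker_mul_mul_of_ker_eq (hM : M.IsHermitian) (hN : N.IsHermitian)
    (hker : LinearMap.ker N.mulVecLin = LinearMap.ker M.mulVecLin) :
    LinearMap.ker (M * N * M).mulVecLin = LinearMap.ker M.mulVecLin := by
  rw [mulVecLin_mul, LinearMap.ker_comp, mulVecLin_mul, LinearMap.ker_comp, ← hker,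
    ← LinearMap.ker_comp, ← mulVecLin_mul, hN.ker_mul_self, hker, ← LinearMap.ker_comp,
    ← mulVecLin_mul, hM.ker_mul_self]

variable [DecidableEq m]

lemma continuousOn_spectrum (f : ℝ → ℝ) (M : Matrix m m 𝕜) : ContinuousOn f (spectrum ℝ M) :=
  M.finite_real_spectrum.continuousOn f

lemma IsHermitian.det_cfc (hM : M.IsHermitian) (f : ℝ → ℝ) :
    (cfc f M).det = ∏ i, (f (hM.eigenvalues i) : 𝕜) := by
  rw [hM.cfc_eq, IsHermitian.cfc, det_map]
  simp

/-- The orthogonal projection onto the range of `M`: `x⁻¹ * x` is the indicator of `x ≠ 0`,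
because `0⁻¹ = 0`. -/
noncomputable def supportProj (M : Matrix m m 𝕜) : Matrix m m 𝕜 :=
  cfc (fun x : ℝ => x⁻¹ * x) M

lemma supportProj_isHermitian (M : Matrix m m 𝕜) : (supportProj M).IsHermitian :=
  cfc_predicate _ M

lemma IsHermitian.supportProj_eq_mul (hM : M.IsHermitian) :
    supportProj M = cfc (·⁻¹ : ℝ → ℝ) M * M := by
  rw [supportProj, cfc_mul _ _ M (continuousOn_spectrum _ M) (continuousOn_spectrum _ M),
    cfc_id' ℝ M]

lemma IsHermitian.mul_supportProj (hM : M.IsHermitian) : M * supportProj M = M := by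
  have h := cfc_mul (fun x : ℝ => x) (fun x : ℝ => x⁻¹ * x) M
    (continuousOn_spectrum _ M) (continuousOn_spectrum _ M)
  simp only [← mul_assoc, mul_inv_mul_cancel, cfc_id' ℝ M] at h
  exact h.symm

lemma IsHermitian.supportProj_mul (hM : M.IsHermitian) : supportProj M * M = M := by
  have h := congrArg (fun X => Xᴴ) hM.mul_supportProj
  simpa only [conjTranspose_mul, hM.eq, (supportProj_isHermitian M).eq] using h

lemma IsHermitian.supportProj_mul_self (hM : M.IsHermitian) :
    supportProj M * supportProj M = supportProj M :=
  calc supportProj M * supportProj M = cfc (·⁻¹ : ℝ → ℝ) M * M * supportProj M := by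
        rw [← hM.supportProj_eq_mul]
    _ = supportProj M := by rw [mul_assoc, hM.mul_supportProj, hM.supportProj_eq_mul]

lemma IsHermitian.ker_supportProj (hM : M.IsHermitian) :
    LinearMap.ker (supportProj M).mulVecLin = LinearMap.ker M.mulVecLin := by
  refine le_antisymm ?_ ?_
  · conv_rhs => rw [← hM.mul_supportProj]
    exact ker_le_ker_mul _ _
  · rw [hM.supportProj_eq_mul]
    exact ker_le_ker_mul _ _

lemma IsHermitian.supportProj_eq_of_ker_eq (hM : M.IsHermitian) (hN : N.IsHermitian)
    (hker : LinearMap.ker M.mulVecLin = LinearMap.ker N.mulVecLin) :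
    supportProj M = supportProj N := by
  have hMN : supportProj M * supportProj N = supportProj M :=
    mul_eq_left_of_ker_le (by rw [hM.ker_supportProj, hker]) hN.mul_supportProj
  have hNM : supportProj N * supportProj M = supportProj N :=
    mul_eq_left_of_ker_le (by rw [hN.ker_supportProj, hker]) hM.mul_supportProj
  rw [← hMN, ← (supportProj_isHermitian M).eq, ← (supportProj_isHermitian N).eq,
    ← conjTranspose_mul, hNM, (supportProj_isHermitian N).eq]

lemma PosSemidef.sqrt_eq_cfcSqrt (hA : A.PosSemidef) : hA.sqrt = CFC.sqrt A := by
  rw [CFC.sqrt_eq_cfc, cfc_nnreal_eq_real _ A hA.nonneg, hA.1.cfc_eq]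
  simp [IsHermitian.cfc, PosSemidef.sqrt, Function.comp_def, Real.coe_toNNReal',
    hA.eigenvalues_nonneg]

lemma PosSemidef.posSemidef_sqrt (hA : A.PosSemidef) : hA.sqrt.PosSemidef := by
  rw [hA.sqrt_eq_cfcSqrt]
  exact (CFC.sqrt_nonneg A).posSemidef

lemma PosSemidef.sqrt_mul_self (hA : A.PosSemidef) : hA.sqrt * hA.sqrt = A := by
  rw [hA.sqrt_eq_cfcSqrt]
  exact CFC.sqrt_mul_sqrt_self A hA.nonneg

end Hermitian

end Matrix

namespace IsMoorePenroseInv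

variable {n : ℕ} {A B C : Matrix (Fin n) (Fin n) ℝ}

lemma symm (h : IsMoorePenroseInv A B) : IsMoorePenroseInv B A :=
  ⟨h.2.1, h.1, h.2.2.2, h.2.2.1⟩

lemma transpose (h : IsMoorePenroseInv A B) : IsMoorePenroseInv Aᵀ Bᵀ := by
  obtain ⟨hABA, hBAB, hAB, hBA⟩ := h
  refine ⟨?_, ?_, ?_, ?_⟩
  · rw [← transpose_mul, ← transpose_mul, ← mul_assoc, hABA]
  · rw [← transpose_mul, ← transpose_mul, ← mul_assoc, hBAB]
  · rw [← transpose_mul, transpose_transpose, hBA]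
  · rw [← transpose_mul, transpose_transpose, hAB]

lemma mul_left_eq (hB : IsMoorePenroseInv A B) (hC : IsMoorePenroseInv A C) : A * B = A * C :=
  calc A * B = (A * C)ᵀ * (A * B)ᵀ := by rw [hC.2.2.1, hB.2.2.1, ← mul_assoc, hC.1]
    _ = A * C := by rw [← transpose_mul, ← mul_assoc, hB.1, hC.2.2.1]

lemma unique (hB : IsMoorePenroseInv A B) (hC : IsMoorePenroseInv A C) : B = C := by
  have hBA : B * A = C * A := by
    simpa only [← transpose_mul, transpose_inj] using hB.transpose.mul_left_eq hC.transpose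
  calc B = B * (A * B) := by rw [← mul_assoc, hB.2.1]
    _ = C := by rw [hB.mul_left_eq hC, ← mul_assoc, hBA, hC.2.1]

lemma isSymm (hA : A.IsSymm) (h : IsMoorePenroseInv A B) : B.IsSymm :=
  (h.unique (hA.eq ▸ h.transpose)).symm

lemma posSemidef (hA : A.PosSemidef) (h : IsMoorePenroseInv A B) : B.PosSemidef := by
  have hB : Bᴴ = B := (h.isSymm (isHermitian_iff_isSymm.mp hA.isHermitian)).eq
  simpa only [hB, h.2.1] using hA.conjTranspose_mul_mul_same B

lemma ker_le (hA : A.IsSymm) (h : IsMoorePenroseInv A B) :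
    LinearMap.ker A.mulVecLin ≤ LinearMap.ker B.mulVecLin := by
  have hBA : B * A = A * B := by rw [← h.2.2.2, transpose_mul, hA.eq, (h.isSymm hA).eq]
  have hB : B * B * A = B := by rw [mul_assoc, hBA, ← mul_assoc, h.2.1]
  calc LinearMap.ker A.mulVecLin ≤ LinearMap.ker (B * B * A).mulVecLin := ker_le_ker_mul _ _
    _ = LinearMap.ker B.mulVecLin := by rw [hB]

lemma ker_eq (hA : A.IsSymm) (h : IsMoorePenroseInv A B) :
    LinearMap.ker B.mulVecLin = LinearMap.ker A.mulVecLin :=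
  le_antisymm (h.symm.ker_le (h.isSymm hA)) (h.ker_le hA)

end IsMoorePenroseInv

lemma pdet_eq_det_add_one_sub_supportProj {n : ℕ} {M : Matrix (Fin n) (Fin n) ℝ}
    (hM : M.IsHermitian) : pdet M hM = (M + 1 - supportProj M).det := by
  have h : M + 1 - supportProj M = cfc (fun x : ℝ => x + 1 - x⁻¹ * x) M := by
    rw [cfc_sub (hf := continuousOn_spectrum _ M) (hg := continuousOn_spectrum _ M),
      cfc_add (hf := continuousOn_spectrum _ M) (hg := continuousOn_spectrum _ M), cfc_id' ℝ M,
      cfc_const_one ℝ M]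
    rfl
  rw [h, hM.det_cfc, pdet, Finset.prod_filter]
  refine Finset.prod_congr rfl fun i _ => ?_
  by_cases hi : hM.eigenvalues i = 0 <;> simp [hi]

theorem pdet_mul_self_mul_pdet {n : ℕ} {S Y : Matrix (Fin n) (Fin n) ℝ} (hS : S.IsHermitian)
    (hY : Y.IsHermitian) (hSS : (S * S).IsHermitian) (hSYS : (S * Y * S).IsHermitian)
    (hker : LinearMap.ker Y.mulVecLin = LinearMap.ker S.mulVecLin) :
    pdet (S * S) hSS * pdet Y hY = pdet (S * Y * S) hSYS := by
  set P := supportProj S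
  have hPY : supportProj Y = P := hY.supportProj_eq_of_ker_eq hS hker
  have hPSS : supportProj (S * S) = P := hSS.supportProj_eq_of_ker_eq hS hS.ker_mul_self
  have hPSYS : supportProj (S * Y * S) = P :=
    hSYS.supportProj_eq_of_ker_eq hS (hS.ker_mul_mul_of_ker_eq hY hker)
  have hSP : S * P = S := hS.mul_supportProj
  have hPS : P * S = S := hS.supportProj_mul
  have hPP : P * P = P := hS.supportProj_mul_self
  have hPY' : P * Y = Y := hPY ▸ hY.supportProj_mul
  have hSYP : S * Y * P = S * Y := by rw [mul_assoc, ← hPY, hY.mul_supportProj]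
  rw [pdet_eq_det_add_one_sub_supportProj, pdet_eq_det_add_one_sub_supportProj,
    pdet_eq_det_add_one_sub_supportProj, hPY, hPSS, hPSYS,
    ← add_one_sub_mul_add_one_sub hSP hPS hPP, ← add_one_sub_mul_add_one_sub hSYP hPS hPP,
    ← add_one_sub_mul_add_one_sub hSP hPY' hPP, det_mul, det_mul, det_mul]
  ring

/-- If `Σ ⪰ Ψ ⪰ 0`, `Ψ⁺ ⪰ Σ⁺` and `Φ = (Σ^{1/2})ᵀ Ψ⁺ Σ^{1/2}`, then
`pdet(Σ) · pdet(Ψ⁺) = pdet(Φ)`. -/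
theorem stmt_3 {n : ℕ} (Sig Psi Sigp Psip : Matrix (Fin n) (Fin n) ℝ)
    (hSig : Sig.PosSemidef) (hPsi : Psi.PosSemidef)
    (hSigp : IsMoorePenroseInv Sig Sigp) (hPsip : IsMoorePenroseInv Psi Psip)
    (hge : (Sig - Psi).PosSemidef) (hgep : (Psip - Sigp).PosSemidef)
    (hPsipH : Psip.IsHermitian)
    (hPhiH : ((hSig.sqrt)ᵀ * Psip * hSig.sqrt).IsHermitian) :
    pdet Sig hSig.isHermitian * pdet Psip hPsipH
      = pdet ((hSig.sqrt)ᵀ * Psip * hSig.sqrt) hPhiH := by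
  have hker : LinearMap.ker Psip.mulVecLin = LinearMap.ker Sig.mulVecLin := by
    refine le_antisymm ?_ ?_
    · calc LinearMap.ker Psip.mulVecLin ≤ LinearMap.ker Sigp.mulVecLin :=
            (hSigp.posSemidef hSig).ker_le_of_sub_posSemidef hgep
        _ = LinearMap.ker Sig.mulVecLin := hSigp.ker_eq (isHermitian_iff_isSymm.mp hSig.1)
    · calc LinearMap.ker Sig.mulVecLin ≤ LinearMap.ker Psi.mulVecLin :=
            hPsi.ker_le_of_sub_posSemidef hge
        _ = LinearMap.ker Psip.mulVecLin := (hPsip.ker_eq (isHermitian_iff_isSymm.mp hPsi.1)).symm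
  have hS : hSig.sqrt.IsHermitian := hSig.posSemidef_sqrt.isHermitian
  have hSS : hSig.sqrt * hSig.sqrt = Sig := hSig.sqrt_mul_self
  have hST : hSig.sqrtᵀ = hSig.sqrt := (isHermitian_iff_isSymm.mp hS).eq
  have key := pdet_mul_self_mul_pdet hS hPsipH (by rw [hSS]; exact hSig.isHermitian)
    (by rwa [hST] at hPhiH) (by rw [hker, ← hS.ker_mul_self, hSS])
  convert key using 2 <;> simp only [hSS, hST]
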